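/- arXiv:2212.00366 — 2 statements merged into one kernel-verified Lean document; each statement's English description precedes it below -/
import Mathlib

section
/- Let k ≥ 1 and q > 2 be natural numbers, and let K ⊂ ℂ be a number field such that K(ζ_{φ(q)}) ∩ ℚ(ζ_q) = ℚ. Then the numbers L(2k+1, χ), where χ ranges over the Dirichlet characters modulo q with χ(−1) = −1, are linearly independent over K(ζ_{φ(q)}). -/
open scoped Real

/-- The value `L(k, χ) = ∑_{n ≥ 1} χ(n)/n^k` of the Dirichlet `L`-function of `χ`. -/
noncomputable def Lval (q : ℕ) (χ : DirichletCharacter ℂ q) (k : ℕ) : ℂ :=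
  ∑' n : ℕ, χ (n : ZMod q) / (n : ℂ) ^ k

/-!
Expanding an odd character in additive characters and summing the Fourier series of the periodic
Bernoulli function gives, for odd `s ≥ 3`, `L(s, χ) = c_s · S(χ)` with `c_s ≠ 0` independent of
`χ` and `S(χ) = ∑_j B_s(j/q) τ(χ, ψ_{-j})` a combination of Gauss sums with rational coefficients.
A relation `∑ g_χ L(s, χ) = 0` with `g_χ ∈ F = K(ζ_{φ(q)})` is therefore a polynomial identity over
`F` in a primitive `q`-th root of unity. As `F ∩ ℚ(ζ_q) = ℚ`, the cyclotomic polynomial stays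
irreducible over `F`, so the identity survives `ζ ↦ ζ^u`, which multiplies `S(χ)` by `χ(u)⁻¹`.
Dedekind's independence of characters gives `g_χ S(χ) = 0`, and `S(χ) ≠ 0` since `L(s, χ) ≠ 0`.
-/

open Complex Finset IntermediateField Polynomial ZMod
open scoped Nat

theorem AddChar.isPrimitiveRoot_apply_one {q : ℕ} {M : Type*} [CommMonoid M]
    {ψ : AddChar (ZMod q) M} (hψ : Function.Injective ψ) : IsPrimitiveRoot (ψ 1) q where
  pow_eq_one := by rw [← map_nsmul_eq_pow, nsmul_one, natCast_self, map_zero_eq_one]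
  dvd_of_pow_eq_one l hl := by
    rw [← map_nsmul_eq_pow, ← map_zero_eq_one ψ, hψ.eq_iff, nsmul_one] at hl
    exact (natCast_eq_zero_iff l q).mp hl

theorem bernoulliFun_ratCast (s : ℕ) (r : ℚ) :
    bernoulliFun s r = (Polynomial.bernoulli s).eval r := by
  simpa [bernoulliFun] using aeval_algebraMap_apply ℝ r (Polynomial.bernoulli s)

theorem Lval_ne_zero {q : ℕ} (χ : DirichletCharacter ℂ q) {s : ℕ} (hs : 2 ≤ s) :
    Lval q χ s ≠ 0 := by
  convert DirichletCharacter.LSeries_ne_zero_of_one_lt_re χ (s := s) (by simp; omega) using 1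
  refine tsum_congr fun n ↦ ?_
  rcases eq_or_ne n 0 with rfl | hn
  · simp [zero_pow (by omega : s ≠ 0)]
  · simp [LSeries.term_of_ne_zero hn]

section

variable {q : ℕ} [NeZero q]

theorem IsPrimitiveRoot.minpoly_eq_cyclotomic_of_inf_eq_bot {F : IntermediateField ℚ ℂ} {ζ ξ : ℂ}
    (hζ : IsPrimitiveRoot ζ q) (hF : F ⊓ ℚ⟮ζ⟯ = ⊥) (hξ : IsPrimitiveRoot ξ q) :
    minpoly F ξ = cyclotomic q F := by
  have hmonic := minpoly.monic (hξ.isIntegral (NeZero.pos q)).tower_top (A := F)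
  have hdvd : minpoly F ξ ∣ cyclotomic q F := minpoly.dvd F ξ <| by
    rw [← eval_map_algebraMap, map_cyclotomic]; exact hξ.isRoot_cyclotomic (NeZero.pos q)
  set m := (minpoly F ξ).map (algebraMap F ℂ)
  -- the roots of `m` are `q`-th roots of unity, hence powers of `ζ`
  have hroots : m ∈ lifts (algebraMap ℚ⟮ζ⟯ ℂ) := by
    refine (IsAlgClosed.splits m).mem_lift_of_roots_mem_range (hmonic.map _) _ fun a ha ↦ ?_
    have : (cyclotomic q ℂ).IsRoot a :=
      (isRoot_of_mem_roots ha).dvd (by simpa using Polynomial.map_dvd (algebraMap F ℂ) hdvd)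
    obtain ⟨i, -, rfl⟩ := hζ.eq_pow_of_pow_eq_one (isRoot_cyclotomic_iff.mp this).pow_eq_one
    exact ⟨⟨ζ ^ i, pow_mem (mem_adjoin_simple_self ℚ ζ) i⟩, rfl⟩
  obtain ⟨p, hp⟩ : ∃ p : ℚ[X], p.map (algebraMap ℚ ℂ) = m := by
    refine (mem_lifts m).mp <| (lifts_iff_coeff_lifts m).mpr fun n ↦ mem_bot.mp ?_
    rw [← hF]
    refine ⟨by simp [m], ?_⟩
    obtain ⟨c, hc⟩ := (lifts_iff_coeff_lifts m).mp hroots n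
    exact hc ▸ c.2
  have hp0 : aeval ξ p = 0 := by
    rw [← eval_map_algebraMap, hp, eval_map_algebraMap, minpoly.aeval]
  have hdeg : p.natDegree = (minpoly F ξ).natDegree := by
    rw [← natDegree_map_eq_of_injective (algebraMap ℚ ℂ).injective, hp,
      natDegree_map_eq_of_injective (algebraMap F ℂ).injective]
  refine (eq_of_monic_of_dvd_of_natDegree_le hmonic (cyclotomic.monic q F) hdvd ?_).symm
  rw [natDegree_cyclotomic, ← hdeg, ← natDegree_cyclotomic q ℚ,
    cyclotomic_eq_minpoly_rat hξ (NeZero.pos q)]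
  refine natDegree_le_of_dvd (minpoly.dvd ℚ ξ hp0) fun h ↦ ?_
  exact (hmonic.map (algebraMap F ℂ)).ne_zero (hp.symm.trans (by rw [h, Polynomial.map_zero]))

theorem AddChar.apply_eq_pow_val {M : Type*} [Monoid M] (ψ : AddChar (ZMod q) M) (a : ZMod q) :
    ψ a = ψ 1 ^ a.val := by
  rw [← map_nsmul_eq_pow, nsmul_one, natCast_zmod_val]

theorem IsPrimitiveRoot.sum_mul_addChar_eq_zero {F : IntermediateField ℚ ℂ} {ζ : ℂ}
    (hζ : IsPrimitiveRoot ζ q) (hF : F ⊓ ℚ⟮ζ⟯ = ⊥) {ψ ψ' : AddChar (ZMod q) ℂ}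
    (hψ : IsPrimitiveRoot (ψ 1) q) (hψ' : IsPrimitiveRoot (ψ' 1) q) {ι : Type*} [Fintype ι]
    {c : ι → ℂ} (hc : ∀ i, c i ∈ F) (n : ι → ZMod q) (h : ∑ i, c i * ψ (n i) = 0) :
    ∑ i, c i * ψ' (n i) = 0 := by
  let P : F[X] := ∑ i, C ⟨c i, hc i⟩ * X ^ (n i).val
  have hP (ψ₀ : AddChar (ZMod q) ℂ) : aeval (ψ₀ 1) P = ∑ i, c i * ψ₀ (n i) := by
    simp only [P, map_sum, map_mul, aeval_C, map_pow, aeval_X, IntermediateField.algebraMap_apply,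
      ← AddChar.apply_eq_pow_val]
  rw [← hP] at h ⊢
  obtain ⟨R, hR⟩ := hζ.minpoly_eq_cyclotomic_of_inf_eq_bot hF hψ ▸ minpoly.dvd F _ h
  rw [hR, map_mul, ← eval_map_algebraMap, map_cyclotomic,
    (hψ'.isRoot_cyclotomic (NeZero.pos q)).eq_zero, zero_mul]

theorem ZMod.fourier_toAddCircle (n : ℤ) (j : ZMod q) :
    fourier n (toAddCircle j) = stdAddChar (j * (n : ZMod q)) := by
  rw [fourier_apply, ← map_zsmul, zsmul_eq_mul, mul_comm]; rfl

theorem ZMod.hasSum_stdAddChar_sub_div_pow {s : ℕ} (hs : 2 ≤ s) (hodd : Odd s) (j : ZMod q) :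
    HasSum
      (fun n : ℕ ↦ (stdAddChar (j * (n : ZMod q)) - stdAddChar (-(j * (n : ZMod q)))) / (n : ℂ) ^ s)
      (-(2 * π * I) ^ s / s ! * bernoulliFun s (j.val / q)) := by
  have hx : (j.val / q : ℝ) ∈ Set.Icc 0 1 :=
    ⟨by positivity, div_le_one_of_le₀ (mod_cast (val_lt j).le) (Nat.cast_nonneg q)⟩
  convert hasSum_one_div_nat_pow_mul_fourier hs hx using 2 with n
  rw [← toAddCircle_apply, fourier_toAddCircle, fourier_toAddCircle, hodd.neg_one_pow]
  push_cast
  rw [mul_neg]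
  ring

theorem ZMod.two_mul_mul_eq_sum_dft_mul_of_odd {Φ : ZMod q → ℂ} (hΦ : Φ.Odd) (a : ZMod q) :
    2 * q * Φ a = ∑ j, 𝓕 Φ j * (stdAddChar (j * a) - stdAddChar (-(j * a))) := by
  have h₁ := congrFun (dft_dft Φ) (-a)
  have h₂ := congrFun (dft_dft Φ) a
  simp only [dft_apply (𝓕 Φ), smul_eq_mul, neg_neg, mul_neg, hΦ a] at h₁ h₂
  simp only [mul_comm (𝓕 Φ _), sub_mul]
  rw [sum_sub_distrib, h₁, h₂]
  ring

theorem ZMod.hasSum_div_pow_of_odd {Φ : ZMod q → ℂ} (hΦ : Φ.Odd) {s : ℕ} (hs : 2 ≤ s)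
    (hodd : Odd s) :
    HasSum (fun n : ℕ ↦ Φ n / (n : ℂ) ^ s)
      (-(2 * π * I) ^ s / s ! / (2 * q) * ∑ j, 𝓕 Φ j * bernoulliFun s (j.val / q)) := by
  have hq : (2 * q : ℂ) ≠ 0 := mul_ne_zero two_ne_zero (NeZero.ne _)
  have key := (hasSum_sum (s := univ) fun j _ ↦ (hasSum_stdAddChar_sub_div_pow hs hodd j).mul_left
    (𝓕 Φ j)).mul_left (2 * q : ℂ)⁻¹
  have hval : -(2 * π * I) ^ s / s ! / (2 * q) * ∑ j, 𝓕 Φ j * bernoulliFun s (j.val / q) =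
      (2 * q : ℂ)⁻¹ * ∑ j, 𝓕 Φ j * (-(2 * π * I) ^ s / s ! * bernoulliFun s (j.val / q)) := by
    rw [mul_sum, mul_sum]
    exact sum_congr rfl fun j _ ↦ by field_simp
  rw [hval]
  refine key.congr_fun fun n ↦ ?_
  rw [eq_inv_mul_iff_mul_eq₀ hq, mul_div_assoc', two_mul_mul_eq_sum_dft_mul_of_odd hΦ, sum_div]
  simp only [mul_div_assoc]

noncomputable def bernoulliGaussSum (s : ℕ) (χ : DirichletCharacter ℂ q)
    (ψ : AddChar (ZMod q) ℂ) : ℂ :=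
  ∑ j, (((Polynomial.bernoulli s).eval ((j.val : ℚ) / q) : ℚ) : ℂ) * gaussSum χ (ψ.mulShift (-j))

theorem bernoulliGaussSum_mulShift (s : ℕ) (χ : DirichletCharacter ℂ q) (ψ : AddChar (ZMod q) ℂ)
    (u : (ZMod q)ˣ) : bernoulliGaussSum s χ (ψ.mulShift u) = χ⁻¹ u * bernoulliGaussSum s χ ψ := by
  rw [bernoulliGaussSum, bernoulliGaussSum, mul_sum]
  refine sum_congr rfl fun j _ ↦ ?_
  rw [AddChar.mulShift_mulShift, mul_comm (u : ZMod q), ← AddChar.mulShift_mulShift,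
    gaussSum_mulShift_eq]
  ring

theorem Lval_eq_mul_bernoulliGaussSum {χ : DirichletCharacter ℂ q} (hχ : χ.Odd) {s : ℕ}
    (hs : 2 ≤ s) (hodd : Odd s) :
    Lval q χ s = -(2 * π * I) ^ s / s ! / (2 * q) * bernoulliGaussSum s χ stdAddChar := by
  rw [Lval, (hasSum_div_pow_of_odd hχ.to_fun hs hodd).tsum_eq, bernoulliGaussSum]
  congr 1
  refine sum_congr rfl fun j _ ↦ ?_
  rw [DirichletCharacter.fourierTransform_eq_gaussSum_mulShift, mul_comm]
  congr 1
  rw [show (j.val / q : ℝ) = (j.val / q : ℚ) by push_cast; rfl, bernoulliFun_ratCast,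
    ofReal_ratCast]

theorem sum_mul_bernoulliGaussSum_mulShift_eq_zero {F : IntermediateField ℚ ℂ} {ζ : ℂ}
    (hζ : IsPrimitiveRoot ζ q) (hF : F ⊓ ℚ⟮ζ⟯ = ⊥) {ψ : AddChar (ZMod q) ℂ}
    (hψ : Function.Injective ψ) {ι : Type*} [Fintype ι] {χ : ι → DirichletCharacter ℂ q}
    (hχ : ∀ i a, χ i a ∈ F) {g : ι → ℂ} (hg : ∀ i, g i ∈ F) {s : ℕ}
    (h : ∑ i, g i * bernoulliGaussSum s (χ i) ψ = 0) (u : (ZMod q)ˣ) :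
    ∑ i, g i * bernoulliGaussSum s (χ i) (ψ.mulShift u) = 0 := by
  have hexpand (ψ₀ : AddChar (ZMod q) ℂ) : ∑ i, g i * bernoulliGaussSum s (χ i) ψ₀ =
      ∑ x : ι × ZMod q × ZMod q, g x.1 * ((Polynomial.bernoulli s).eval ((x.2.1.val : ℚ) / q) : ℚ)
        * χ x.1 x.2.2 * ψ₀ (-x.2.1 * x.2.2) := by
    simp only [bernoulliGaussSum, gaussSum, AddChar.mulShift_apply, Fintype.sum_prod_type, mul_sum,
      mul_assoc]
  rw [hexpand] at h ⊢
  refine hζ.sum_mul_addChar_eq_zero hF (AddChar.isPrimitiveRoot_apply_one hψ)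
    (AddChar.isPrimitiveRoot_apply_one fun a b hab ↦ u.isUnit.mul_right_injective (hψ hab))
    (fun x ↦ mul_mem (mul_mem (hg _) (SubfieldClass.ratCast_mem F _)) (hχ _ _)) _ h

theorem DirichletCharacter.eq_zero_of_forall_sum_mul_apply_eq_zero {ι : Type*} [Fintype ι]
    {χ : ι → DirichletCharacter ℂ q} (hχ : Function.Injective χ) {c : ι → ℂ}
    (h : ∀ u : (ZMod q)ˣ, ∑ i, c i * χ i u = 0) (i : ι) : c i = 0 := by
  have hli := (linearIndependent_monoidHom (ZMod q) ℂ).comp (fun i ↦ (χ i).toMonoidHom)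
    fun i j hij ↦ hχ (MulChar.ext' fun a ↦ congrArg (fun f : ZMod q →* ℂ ↦ f a) hij)
  refine Fintype.linearIndependent_iff.mp hli c (funext fun a ↦ ?_) i
  by_cases ha : IsUnit a
  · obtain ⟨u, rfl⟩ := ha
    simpa [mul_comm] using h u
  · simp [MulChar.map_nonunit _ ha]

theorem DirichletCharacter.apply_mem_adjoin {ζ : ℂ} (hζ : IsPrimitiveRoot ζ q.totient)
    (χ : DirichletCharacter ℂ q) (a : ZMod q) : χ a ∈ ℚ⟮ζ⟯ := by
  by_cases ha : IsUnit a
  · obtain ⟨u, rfl⟩ := ha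
    have : χ u ^ q.totient = 1 := by
      rw [← map_pow, ← Units.val_pow_eq_pow_val, pow_totient, Units.val_one, map_one]
    obtain ⟨i, -, hi⟩ := hζ.eq_pow_of_pow_eq_one this
    exact hi ▸ pow_mem (mem_adjoin_simple_self ℚ ζ) i
  · simp [MulChar.map_nonunit _ ha]

end

theorem odd_Lvalues_linear_independent_general (k q : ℕ) (hk : 1 ≤ k) (hq : 2 < q)
    (K : IntermediateField ℚ ℂ)
    (ζφ ζq : ℂ) (hζφ : IsPrimitiveRoot ζφ q.totient) (hζq : IsPrimitiveRoot ζq q)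
    (hdisj : (K ⊔ IntermediateField.adjoin ℚ {ζφ}) ⊓ IntermediateField.adjoin ℚ {ζq} = ⊥) :
    LinearIndependent ↥(K ⊔ IntermediateField.adjoin ℚ {ζφ})
      (fun χ : {χ : DirichletCharacter ℂ q // χ (-1) = -1} =>
        Lval q χ.1 (2 * k + 1)) := by
  have : NeZero q := ⟨by omega⟩
  have hs : 2 ≤ 2 * k + 1 := by omega
  have hodd : Odd (2 * k + 1) := odd_two_mul_add_one k
  set F := K ⊔ ℚ⟮ζφ⟯
  set S := fun χ : {χ : DirichletCharacter ℂ q // χ (-1) = -1} ↦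
    bernoulliGaussSum (2 * k + 1) χ.1 stdAddChar
  obtain ⟨c, hc, hL⟩ : ∃ c : ℂ, c ≠ 0 ∧ ∀ χ, Lval q χ.1 (2 * k + 1) = c * S χ :=
    ⟨_, by simp [Real.pi_ne_zero, Nat.factorial_ne_zero, NeZero.ne q],
      fun χ ↦ Lval_eq_mul_bernoulliGaussSum χ.2 hs hodd⟩
  rw [Fintype.linearIndependent_iff]
  intro g hg χ
  have hχF (χ : {χ : DirichletCharacter ℂ q // χ (-1) = -1}) (a : ZMod q) : χ.1 a ∈ F :=
    le_sup_right (a := K) (DirichletCharacter.apply_mem_adjoin hζφ χ.1 a)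
  have h₀ : ∑ χ, (g χ : ℂ) * S χ = 0 := by
    refine (mul_eq_zero.mp ?_).resolve_left hc
    rw [mul_sum, ← hg]
    exact sum_congr rfl fun χ _ ↦ by
      rw [hL, Algebra.smul_def, IntermediateField.algebraMap_apply]; ring
  have h₁ (u : (ZMod q)ˣ) : ∑ χ, (g χ * S χ : ℂ) * (χ.1)⁻¹ u = 0 := by
    rw [← sum_mul_bernoulliGaussSum_mulShift_eq_zero hζq hdisj injective_stdAddChar hχF
      (fun χ ↦ (g χ).2) h₀ u]
    simp only [bernoulliGaussSum_mulShift]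
    exact sum_congr rfl fun χ _ ↦ by ring
  have hgS := DirichletCharacter.eq_zero_of_forall_sum_mul_apply_eq_zero
    (inv_injective.comp Subtype.val_injective) h₁ χ
  have hS : S χ ≠ 0 := fun h ↦ Lval_ne_zero χ.1 hs (by rw [hL, h, mul_zero])
  exact_mod_cast (mul_eq_zero.mp hgS).resolve_right hS

/-- **Okada.** Let `k ≥ 1` and `q > 2` be natural numbers and `K ⊆ ℂ` a number field with
`K(ζ_{φ(q)}) ∩ ℚ(ζ_q) = ℚ`.  Then the numbers `L(2k+1, χ)`, where `χ` ranges over the odd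
Dirichlet characters modulo `q`, are linearly independent over `K(ζ_{φ(q)})`. -/
theorem odd_Lvalues_linear_independent (k q : ℕ) (hk : 1 ≤ k) (hq : 2 < q)
    (K : IntermediateField ℚ ℂ) [FiniteDimensional ℚ K]
    (ζφ ζq : ℂ) (hζφ : IsPrimitiveRoot ζφ q.totient) (hζq : IsPrimitiveRoot ζq q)
    (hdisj : (K ⊔ IntermediateField.adjoin ℚ {ζφ}) ⊓ IntermediateField.adjoin ℚ {ζq} = ⊥) :
    LinearIndependent ↥(K ⊔ IntermediateField.adjoin ℚ {ζφ})
      (fun χ : {χ : DirichletCharacter ℂ q // χ (-1) = -1} =>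
        Lval q χ.1 (2 * k + 1)) :=
  odd_Lvalues_linear_independent_general k q hk hq K ζφ ζq hζφ hζq hdisj
end

section
/- Let k > 1 be an integer and let a, q be positive integers with 0 < a/q < 1. Then ζ(k, a/q) + (−1)^k ζ(k, 1 − a/q) = (π^k (−1)^{k−1} / (k−1)!) · cot^{(k−1)}(πa/q). -/
/-!
Logarithmic differentiation of Euler's product for `sin` gives, for real non-integral `x`,
`π cot (π x) = ∑_{n ∈ ℤ} 1 / (x + n)` (summed symmetrically; Mathlib's `cot_series_rep'`).
For `y` near `x` we have `|y + n|⁻ᵏ ≤ 2ᵏ |x + n|⁻ᵏ`, a summable majorant once `k ≥ 2`, so the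
series may be differentiated termwise `k - 1` times:
`π ^ k cot^{(k-1)} (π x) = (-1)^{k-1} (k-1)! ∑_{n ∈ ℤ} (x + n)⁻ᵏ`. Splitting this sum into
`n ≥ 0` and `n < 0` gives `ζ(k, x) + (-1)^k ζ(k, 1 - x)`.
-/

open scoped Real

/-- The Hurwitz zeta value `ζ(k, x) = ∑_{n ≥ 0} 1/(n+x)^k`. -/
noncomputable def hzeta (k : ℕ) (x : ℝ) : ℝ := ∑' n : ℕ, 1 / ((n : ℝ) + x) ^ k

/-- The `m`-th derivative of the (real) cotangent function. -/
noncomputable def cotIter (m : ℕ) (x : ℝ) : ℝ := iteratedDeriv m Real.cot x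

open Set Filter Topology
open scoped Nat

noncomputable def cotTermPow (k n : ℕ) (x : ℝ) : ℝ :=
  1 / (x - (n + 1)) ^ k + 1 / (x + (n + 1)) ^ k

/-- `cotSeriesPow k x = ∑_{n ∈ ℤ} 1 / (x + n) ^ k`, summed symmetrically so that it also
converges for `k = 1`, where it is `π cot (π x)`. -/
noncomputable def cotSeriesPow (k : ℕ) (x : ℝ) : ℝ :=
  1 / x ^ k + ∑' n : ℕ, cotTermPow k n x

lemma summable_one_div_abs_nat_add_pow {j : ℕ} (hj : 2 ≤ j) (a : ℝ) :
    Summable fun n : ℕ => 1 / |n + a| ^ j := by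
  simpa [Real.rpow_natCast] using
    (Real.summable_one_div_nat_add_rpow a j).mpr (by exact_mod_cast hj)

lemma summable_one_div_nat_add_pow {j : ℕ} (hj : 2 ≤ j) (a : ℝ) :
    Summable fun n : ℕ => 1 / ((n : ℝ) + a) ^ j :=
  (summable_one_div_abs_nat_add_pow hj a).of_norm_bounded fun n => by simp

lemma summable_cotTermPow_majorant {j : ℕ} (hj : 2 ≤ j) (x : ℝ) :
    Summable fun n : ℕ => 1 / |x - (n + 1)| ^ j + 1 / |x + (n + 1)| ^ j := by
  refine ((summable_one_div_abs_nat_add_pow hj (1 - x)).add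
    (summable_one_div_abs_nat_add_pow hj (x + 1))).congr fun n => ?_
  rw [abs_sub_comm]
  ring_nf

lemma abs_cotTermPow_le (j n : ℕ) (x : ℝ) :
    |cotTermPow j n x| ≤ 1 / |x - (n + 1)| ^ j + 1 / |x + (n + 1)| ^ j := by
  simpa [cotTermPow] using abs_add_le (1 / (x - (n + 1)) ^ j) (1 / (x + (n + 1)) ^ j)

lemma ofReal_mem_integerComplement {x : ℝ} (hx : x ∉ range ((↑) : ℤ → ℝ)) :
    (x : ℂ) ∈ Complex.integerComplement := by
  rintro ⟨n, hn⟩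
  exact hx ⟨n, by exact_mod_cast hn⟩

lemma summable_cotTermPow {k : ℕ} (hk : 1 ≤ k) {x : ℝ} (hx : x ∉ range ((↑) : ℤ → ℝ)) :
    Summable fun n => cotTermPow k n x := by
  obtain rfl | hk := hk.eq_or_lt
  · refine Complex.summable_ofReal.mp
      ((summable_cotTerm (ofReal_mem_integerComplement hx)).congr fun n => ?_)
    simp [cotTermPow, cotTerm]
  · exact (summable_cotTermPow_majorant hk x).of_norm_bounded fun n => abs_cotTermPow_le k n x

lemma pi_mul_cot_pi_mul {x : ℝ} (hx : x ∉ range ((↑) : ℤ → ℝ)) :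
    π * Real.cot (π * x) = cotSeriesPow 1 x := by
  have h := cot_series_rep' (ofReal_mem_integerComplement hx)
  rw [sub_eq_iff_eq_add'] at h
  apply Complex.ofReal_injective
  push_cast [cotSeriesPow, cotTermPow, Complex.ofReal_tsum, Complex.ofReal_cot]
  simpa using h

lemma hasDerivAt_one_div_pow (k : ℕ) {z : ℝ} (hz : z ≠ 0) :
    HasDerivAt (fun y => 1 / y ^ k) (-k / z ^ (k + 1)) z := by
  simp only [one_div]
  refine ((hasDerivAt_pow k z).inv (pow_ne_zero k hz)).congr_deriv ?_
  rcases k with _ | k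
  · simp
  · rw [Nat.add_sub_cancel]
    field_simp
    ring

lemma hasDerivAt_cotTermPow (k n : ℕ) {y : ℝ} (hy : y ∉ range ((↑) : ℤ → ℝ)) :
    HasDerivAt (cotTermPow k n) (-k * cotTermPow (k + 1) n y) y := by
  have hsub : y - (n + 1) ≠ 0 := fun h => hy ⟨n + 1, by push_cast; linarith⟩
  have hadd : y + (n + 1) ≠ 0 := fun h => hy ⟨-(n + 1), by push_cast; linarith⟩
  refine (((hasDerivAt_one_div_pow k hsub).comp_sub_const y _).add
    ((hasDerivAt_one_div_pow k hadd).comp_add_const y _)).congr_deriv ?_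
  simp only [cotTermPow]
  ring

lemma one_div_abs_sub_pow_le {x y c r : ℝ} (hr : r ≤ |x - c|) (hy : |y - x| < r / 2) (j : ℕ) :
    1 / |y - c| ^ j ≤ 2 ^ j * (1 / |x - c| ^ j) := by
  have hxc : 0 < |x - c| := by linarith [abs_nonneg (y - x)]
  have hyc : |x - c| / 2 ≤ |y - c| := by
    linarith [abs_sub_le x y c, abs_sub_comm x y]
  calc 1 / |y - c| ^ j ≤ 1 / (|x - c| / 2) ^ j :=
        one_div_le_one_div_of_le (by positivity) (pow_le_pow_left₀ (by positivity) hyc j)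
    _ = 2 ^ j * (1 / |x - c| ^ j) := by
        rw [div_pow, one_div_div]
        ring

lemma abs_cotTermPow_le_of_near {x y r : ℝ} (hr : ∀ m : ℤ, r ≤ |x - m|) (hy : |y - x| < r / 2)
    (j n : ℕ) :
    |cotTermPow j n y| ≤ 2 ^ j * (1 / |x - (n + 1)| ^ j + 1 / |x + (n + 1)| ^ j) := by
  have hsub := one_div_abs_sub_pow_le (c := n + 1) (by exact_mod_cast hr (n + 1)) hy j
  have hadd := one_div_abs_sub_pow_le (c := -(n + 1)) (by exact_mod_cast hr (-(n + 1))) hy j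
  simp only [sub_neg_eq_add] at hadd
  linarith [abs_cotTermPow_le j n y]

lemma exists_pos_forall_le_abs_sub_intCast {x : ℝ} (hx : x ∉ range ((↑) : ℤ → ℝ)) :
    ∃ r > 0, ∀ m : ℤ, r ≤ |x - m| := by
  obtain ⟨r, hr, hball⟩ := Metric.isOpen_iff.mp Real.isOpen_compl_range_intCast x hx
  refine ⟨r, hr, fun m => not_lt.mp fun h => hball ?_ ⟨m, rfl⟩⟩
  rwa [Metric.mem_ball, Real.dist_eq, abs_sub_comm]

lemma hasDerivAt_cotSeriesPow {k : ℕ} (hk : 1 ≤ k) {x : ℝ} (hx : x ∉ range ((↑) : ℤ → ℝ)) :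
    HasDerivAt (cotSeriesPow k) (-k * cotSeriesPow (k + 1) x) x := by
  obtain ⟨r, hr, hfar⟩ := exists_pos_forall_le_abs_sub_intCast hx
  have hnear {y : ℝ} (hy : y ∈ Metric.ball x (r / 2)) : |y - x| < r / 2 := by
    rwa [Metric.mem_ball, Real.dist_eq] at hy
  have hint {y : ℝ} (hy : y ∈ Metric.ball x (r / 2)) : y ∉ range ((↑) : ℤ → ℝ) := by
    rintro ⟨m, rfl⟩
    linarith [hfar m, abs_sub_comm x m, hnear hy]
  have hx₀ : x ∈ Metric.ball x (r / 2) := Metric.mem_ball_self (by positivity)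
  have hbound (n : ℕ) (y : ℝ) (hy : y ∈ Metric.ball x (r / 2)) :
      ‖-(k : ℝ) * cotTermPow (k + 1) n y‖
        ≤ k * 2 ^ (k + 1) * (1 / |x - (n + 1)| ^ (k + 1) + 1 / |x + (n + 1)| ^ (k + 1)) := by
    rw [norm_mul, norm_neg, Real.norm_natCast, Real.norm_eq_abs, mul_assoc]
    exact mul_le_mul_of_nonneg_left
      (abs_cotTermPow_le_of_near hfar (hnear hy) (k + 1) n) k.cast_nonneg
  have hseries := hasDerivAt_tsum_of_isPreconnected
    ((summable_cotTermPow_majorant (by omega) x).mul_left _) Metric.isOpen_ball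
    (convex_ball x _).isPreconnected (fun n y hy => hasDerivAt_cotTermPow k n (hint hy))
    hbound hx₀ (summable_cotTermPow hk hx) hx₀
  have hx0 : x ≠ 0 := fun h => hx ⟨0, by simp [h]⟩
  refine ((hasDerivAt_one_div_pow k hx0).add hseries).congr_deriv ?_
  rw [cotSeriesPow, tsum_mul_left]
  ring

lemma deriv_eq_of_eventually_comp_mul {g h : ℝ → ℝ} {c x h' : ℝ} (hc : c ≠ 0)
    (heq : ∀ᶠ y in 𝓝 x, g (c * y) = h y) (hh : HasDerivAt h h' x) :
    deriv g (c * x) = h' / c := by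
  have hdiv : Tendsto (· / c) (𝓝 (c * x)) (𝓝 x) := by
    simpa [mul_div_cancel_left₀ x hc] using (continuous_id.div_const c).tendsto (c * x)
  have hgh : g =ᶠ[𝓝 (c * x)] fun t => h (t / c) :=
    (hdiv.eventually heq).mono fun t ht => by rwa [mul_div_cancel₀ t hc] at ht
  have hh' : HasDerivAt h h' (c * x / c) := by rwa [mul_div_cancel_left₀ x hc]
  rw [hgh.deriv_eq]
  exact (hh'.comp (c * x) ((hasDerivAt_id _).div_const c)).deriv.trans (by simp [div_eq_mul_inv])

lemma iteratedDeriv_cot_pi_mul (m : ℕ) {x : ℝ} (hx : x ∉ range ((↑) : ℤ → ℝ)) :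
    iteratedDeriv m Real.cot (π * x) = (-1) ^ m * m ! / π ^ (m + 1) * cotSeriesPow (m + 1) x := by
  induction m generalizing x with
  | zero =>
    rw [iteratedDeriv_zero, ← pi_mul_cot_pi_mul hx]
    simp [Real.pi_ne_zero]
  | succ m ih =>
    have heq : ∀ᶠ y in 𝓝 x, iteratedDeriv m Real.cot (π * y)
        = (-1) ^ m * m ! / π ^ (m + 1) * cotSeriesPow (m + 1) y :=
      (Real.isOpen_compl_range_intCast.eventually_mem hx).mono fun y hy => ih hy
    rw [iteratedDeriv_succ, deriv_eq_of_eventually_comp_mul Real.pi_ne_zero heq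
      ((hasDerivAt_cotSeriesPow (by omega) hx).const_mul _), Nat.factorial_succ]
    push_cast
    field_simp
    ring

lemma cotSeriesPow_eq_hzeta {k : ℕ} (hk : 2 ≤ k) (x : ℝ) :
    cotSeriesPow k x = hzeta k x + (-1) ^ k * hzeta k (1 - x) := by
  have hneg (n : ℕ) : 1 / (x - (n + 1)) ^ k = (-1) ^ k * (1 / ((n : ℝ) + (1 - x)) ^ k) := by
    rw [show x - (n + 1) = -1 * (n + (1 - x)) by ring, mul_pow, one_div, mul_inv, ← inv_pow,
      inv_neg, inv_one, one_div]
  have hpos (n : ℕ) : 1 / (x + (n + 1)) ^ k = 1 / (((n + 1 : ℕ) : ℝ) + x) ^ k := by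
    push_cast; ring_nf
  have hsum := summable_one_div_nat_add_pow hk
  have hsplit : ∑' n, cotTermPow k n x
      = (-1) ^ k * hzeta k (1 - x) + ∑' n : ℕ, 1 / (((n + 1 : ℕ) : ℝ) + x) ^ k := by
    rw [hzeta, ← tsum_mul_left, ← ((hsum (1 - x)).mul_left _).tsum_add
      ((summable_nat_add_iff 1).mpr (hsum x))]
    exact tsum_congr fun n => by rw [cotTermPow, hneg, hpos]
  rw [cotSeriesPow, hsplit, hzeta.eq_1 k x, (hsum x).tsum_eq_zero_add]
  simp only [CharP.cast_eq_zero, zero_add]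
  ring

lemma notMem_range_intCast_of_mem_Ioo {x : ℝ} (hx : x ∈ Ioo (0 : ℝ) 1) :
    x ∉ range ((↑) : ℤ → ℝ) := by
  rintro ⟨n, rfl⟩
  have h₀ : 0 < n := by exact_mod_cast hx.1
  have h₁ : n < 1 := by exact_mod_cast hx.2
  omega

/-- Let `k > 1` and let `a, q` be positive integers with `0 < a/q < 1`.  Then
`ζ(k, a/q) + (−1)^k ζ(k, 1 − a/q) = (π^k (−1)^{k−1}/(k−1)!) · cot^{(k−1)}(πa/q)`. -/
theorem hzeta_add_eq_cotIter (k a q : ℕ) (hk : 1 < k) (ha : 0 < a) (hq : 0 < q)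
    (haq : a < q) :
    hzeta k ((a : ℝ) / q) + (-1 : ℝ) ^ k * hzeta k (1 - (a : ℝ) / q)
      = π ^ k * (-1 : ℝ) ^ (k - 1) / (Nat.factorial (k - 1) : ℝ) * cotIter (k - 1) (π * a / q) := by
  have hq' : (0 : ℝ) < q := by exact_mod_cast hq
  have hx : (a : ℝ) / q ∈ Ioo (0 : ℝ) 1 :=
    ⟨div_pos (by exact_mod_cast ha) hq', (div_lt_one hq').mpr (by exact_mod_cast haq)⟩
  obtain ⟨j, rfl⟩ : ∃ j, k = j + 1 := ⟨k - 1, by omega⟩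
  have hsign : (-1 : ℝ) ^ j * (-1) ^ j = 1 := by rw [← mul_pow]; norm_num
  rw [cotIter, mul_div_assoc π, iteratedDeriv_cot_pi_mul _ (notMem_range_intCast_of_mem_Ioo hx),
    Nat.add_sub_cancel, ← cotSeriesPow_eq_hzeta (by omega)]
  field_simp
  linear_combination -cotSeriesPow (j + 1) ((a : ℝ) / q) * hsign
end
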